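/- Let μ ∈ ℝ, K ∈ ℝ with K ≥ 0 and K ≤ 1, and let f₃² ≤ 576√10/25 with 36μ⁶ ≤ f₃². Then S := 4μ² + 2√(μ⁴ + 4K) satisfies S ≤ 12. -/
import Mathlib


theorem stmt_9 (mu K f3 : ℝ) (hK0 : K ≥ 0) (hK1 : K ≤ 1)
    (hf3 : f3^2 ≤ 576*Real.sqrt 10/25) (hmu : 36*mu^6 ≤ f3^2) :
    4*mu^2 + 2*Real.sqrt (mu^4 + 4*K) ≤ 12 := by
  have hs : Real.sqrt 10 ≤ 3.2 := by
    rw [show (3.2:ℝ) = Real.sqrt (3.2^2) by rw [Real.sqrt_sq]; norm_num]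
    exact Real.sqrt_le_sqrt (by norm_num)
  have ht : mu^2 ≤ 1.3 := by nlinarith [sq_nonneg mu, sq_nonneg (mu^2), sq_nonneg (mu^2 + 1.3), sq_nonneg (mu^2 - 1.3)]
  have h2 : Real.sqrt (mu^4 + 4*K) ≤ 6 - 2*mu^2 := by
    have hle : mu^4 + 4*K ≤ (6 - 2*mu^2)^2 := by nlinarith [sq_nonneg mu]
    have h6 : (0:ℝ) ≤ 6 - 2*mu^2 := by nlinarith
    calc Real.sqrt (mu^4 + 4*K) ≤ Real.sqrt ((6 - 2*mu^2)^2) := Real.sqrt_le_sqrt hle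
      _ = 6 - 2*mu^2 := Real.sqrt_sq h6
  nlinarith
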